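/- The function f(x) = (1/(4π))·(3√((2−|x|)/|x|) − 2 arctan(√((2−|x|)/|x|)))·1_{[−2,2]}(x) is nonnegative and ∫_{−2}^{2} f(x) dx = 1. -/

import Mathlib

open Real

/-- Waiting-time-corrected density for the triggered shot noise with l = 2. -/
noncomputable def fwt (x : ℝ) : ℝ :=
  Set.indicator (Set.Icc (-2 : ℝ) 2)
    (fun x => 1 / (4 * π) *
      (3 * Real.sqrt ((2 - |x|) / |x|) - 2 * Real.arctan (Real.sqrt ((2 - |x|) / |x|)))) x

/-!
For `0 < x ≤ 2` one has `arctan √((2 - x) / x) = arccos √(x / 2)`, and in this form `4π · fwt`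
has the elementary primitive `4 √(x (2 - x)) - (4 + 2x) arccos √(x / 2)`, which increases by `2π`
over `[0, 2]`. Nonnegativity comes from `arctan t ≤ t`; it also makes the integrand, singular like
`x^(-1/2)` at `0`, integrable, since a nonnegative derivative is automatically integrable.
Evenness doubles the integral over `[0, 2]`, which is `1/2`.
-/

open Set MeasureTheory intervalIntegral
open scoped Interval

theorem intervalIntegral.integral_neg_self_eq_two_smul_of_even {E : Type*}
    [NormedAddCommGroup E] [NormedSpace ℝ E] {f : ℝ → E} (hf : ∀ x, f (-x) = f x) {a : ℝ}
    (hint : IntervalIntegrable f volume 0 a) :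
    ∫ x in -a..a, f x = (2 : ℝ) • ∫ x in 0..a, f x := by
  have hf' : (fun x ↦ f (-x)) = f := funext hf
  have hint' : IntervalIntegrable f volume (-a) 0 := by
    simpa [hf'] using (IntervalIntegrable.iff_comp_neg (f := f)).mp hint.symm
  have hleft : ∫ x in -a..0, f x = ∫ x in 0..a, f x := by
    simpa [hf'] using (integral_comp_neg (a := 0) (b := a) (f := f)).symm
  rw [← integral_add_adjacent_intervals hint' hint, hleft, two_smul]

namespace Real

theorem arctan_le_self {x : ℝ} (hx : 0 ≤ x) : arctan x ≤ x := by
  simpa using le_tan (arctan_nonneg.2 hx) (arctan_lt_pi_div_two x)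

theorem three_mul_sub_two_mul_arctan_nonneg {x : ℝ} (hx : 0 ≤ x) :
    0 ≤ 3 * x - 2 * arctan x := by
  linarith [arctan_le_self hx]

theorem arctan_sqrt_two_sub_div_self {x : ℝ} (hx₀ : 0 < x) (hx₂ : x ≤ 2) :
    arctan √((2 - x) / x) = arccos √(x / 2) := by
  have h : 1 + √((2 - x) / x) ^ 2 = 2 / x := by
    rw [sq_sqrt (div_nonneg (by linarith) hx₀.le)]
    field_simp
    ring
  rw [arctan_eq_arccos (sqrt_nonneg _), h, ← sqrt_inv, inv_div]

theorem hasDerivAt_arccos_sqrt_half {x : ℝ} (hx : x ∈ Ioo 0 2) :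
    HasDerivAt (fun y ↦ arccos √(y / 2)) (-1 / (2 * √(x * (2 - x)))) x := by
  obtain ⟨hx₀, hx₂⟩ := hx
  have hsq : √(x / 2) ^ 2 = x / 2 := sq_sqrt (by positivity)
  have hlt : √(x / 2) < 1 := by
    rw [sqrt_lt' one_pos]
    linarith
  have hsqrt := ((hasDerivAt_id' x).div_const 2).sqrt (by positivity)
  refine ((hasDerivAt_arccos (by linarith [sqrt_nonneg (x / 2)]) hlt.ne).comp x
    hsqrt).congr_deriv ?_
  have hA : 0 < √(1 - √(x / 2) ^ 2) := sqrt_pos.2 (by nlinarith)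
  have hB : 0 < √(x / 2) := sqrt_pos.2 (by positivity)
  have hAB : √(x * (2 - x)) = 2 * (√(1 - √(x / 2) ^ 2) * √(x / 2)) := by
    rw [hsq, ← sqrt_mul (by linarith), show x * (2 - x) = 2 ^ 2 * ((1 - x / 2) * (x / 2)) by ring,
      sqrt_mul (by norm_num), sqrt_sq (by norm_num)]
  rw [hAB]
  field_simp

end Real

noncomputable def fwtKernel (x : ℝ) : ℝ :=
  3 * √((2 - x) / x) - 2 * arccos √(x / 2)

noncomputable def fwtKernelPrimitive (x : ℝ) : ℝ :=
  4 * √(x * (2 - x)) - (4 + 2 * x) * arccos √(x / 2)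

theorem fwt_nonneg (x : ℝ) : 0 ≤ fwt x :=
  indicator_nonneg (fun _ _ ↦ mul_nonneg (by positivity)
    (three_mul_sub_two_mul_arctan_nonneg (sqrt_nonneg _))) x

theorem fwt_neg (x : ℝ) : fwt (-x) = fwt x := by
  simp only [fwt, indicator, abs_neg, neg_mem_Icc_iff, neg_neg]

theorem fwtKernel_eq {x : ℝ} (hx : x ∈ Ioc 0 2) :
    fwtKernel x = 3 * √((2 - x) / x) - 2 * arctan √((2 - x) / x) := by
  rw [fwtKernel, arctan_sqrt_two_sub_div_self hx.1 hx.2]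

theorem fwtKernel_nonneg {x : ℝ} (hx : x ∈ Ioc 0 2) : 0 ≤ fwtKernel x := by
  rw [fwtKernel_eq hx]
  exact three_mul_sub_two_mul_arctan_nonneg (sqrt_nonneg _)

theorem eqOn_fwt_fwtKernel : EqOn fwt (fun x ↦ 1 / (4 * π) * fwtKernel x) (Ι 0 2) := by
  rw [uIoc_of_le zero_le_two]
  intro x hx
  have hx' : x ∈ Icc (-2 : ℝ) 2 := ⟨by linarith [hx.1], hx.2⟩
  rw [fwt, indicator_of_mem hx', abs_of_pos hx.1]
  exact congrArg _ (fwtKernel_eq hx).symm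

theorem continuous_fwtKernelPrimitive : Continuous fwtKernelPrimitive := by
  unfold fwtKernelPrimitive
  fun_prop

theorem hasDerivAt_fwtKernelPrimitive {x : ℝ} (hx : x ∈ Ioo 0 2) :
    HasDerivAt fwtKernelPrimitive (fwtKernel x) x := by
  obtain ⟨hx₀, hx₂⟩ := hx
  have hpos : 0 < x * (2 - x) := by nlinarith
  have hs : 0 < √(x * (2 - x)) := sqrt_pos.2 hpos
  have hratio : √((2 - x) / x) = (2 - x) / √(x * (2 - x)) := by
    rw [eq_div_iff hs.ne', ← sqrt_mul (by positivity),
      show (2 - x) / x * (x * (2 - x)) = (2 - x) ^ 2 by field_simp, sqrt_sq (by linarith)]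
  have hprod : HasDerivAt (fun y ↦ y * (2 - y)) (1 * (2 - x) + x * (0 - 1)) x :=
    (hasDerivAt_id' x).mul ((hasDerivAt_const x 2).sub (hasDerivAt_id' x))
  have hlin : HasDerivAt (fun y ↦ 4 + 2 * y) (0 + 2 * 1) x :=
    (hasDerivAt_const x 4).add ((hasDerivAt_id' x).const_mul 2)
  refine (((hprod.sqrt hpos.ne').const_mul 4).sub
    (hlin.mul (hasDerivAt_arccos_sqrt_half ⟨hx₀, hx₂⟩))).congr_deriv ?_
  rw [fwtKernel, hratio]
  field_simp
  ring

theorem intervalIntegrable_fwtKernel : IntervalIntegrable fwtKernel volume 0 2 :=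
  intervalIntegrable_deriv_of_nonneg continuous_fwtKernelPrimitive.continuousOn
    (fun _ hx ↦ hasDerivAt_fwtKernelPrimitive (by simpa using hx))
    (fun _ hx ↦ fwtKernel_nonneg (Ioo_subset_Ioc_self (by simpa using hx)))

theorem integral_fwtKernel : ∫ x in 0..2, fwtKernel x = 2 * π := by
  rw [integral_eq_sub_of_hasDerivAt_of_le zero_le_two
    continuous_fwtKernelPrimitive.continuousOn (fun _ hx ↦ hasDerivAt_fwtKernelPrimitive hx)
    intervalIntegrable_fwtKernel]
  simp [fwtKernelPrimitive]
  ring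

theorem fwt_is_density :
    (∀ x : ℝ, 0 ≤ fwt x) ∧ (∫ x in (-2 : ℝ)..2, fwt x) = 1 := by
  have hint : IntervalIntegrable fwt volume 0 2 :=
    (intervalIntegrable_congr eqOn_fwt_fwtKernel).2 (intervalIntegrable_fwtKernel.const_mul _)
  have hhalf : ∫ x in 0..2, fwt x = 1 / 2 := by
    rw [integral_congr_ae (.of_forall fun _ hx ↦ eqOn_fwt_fwtKernel hx),
      intervalIntegral.integral_const_mul, integral_fwtKernel]
    field_simp
    norm_num
  refine ⟨fwt_nonneg, ?_⟩
  rw [integral_neg_self_eq_two_smul_of_even fwt_neg hint, hhalf]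
  norm_num
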